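/- arXiv:math/0306059 — 6 statements merged into one kernel-verified Lean document; each statement's English description precedes it below -/
import Mathlib

section
/- If u(x,y,t) = h(r) with r = (x²+y²)²+t² and h ∈ C²((0,∞)), then the horizontal Hessian determinant satisfies det H(u) = 48(x²+y²)²·(4r·h''(r) + 3h'(r))·h'(r), where H(u) is the symmetrized horizontal Hessian with entries X²u, (XYu+YXu)/2, Y²u. -/
noncomputable section

abbrev H1 := ℝ × ℝ × ℝ

/-- Heisenberg group multiplication: ξ₀∘ξ = (x₀+x, y₀+y, t₀+t+2(x y₀ - y x₀)). -/
def hmul (a b : H1) : H1 :=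
  (a.1 + b.1, a.2.1 + b.2.1, a.2.2 + b.2.2 + 2 * (b.1 * a.2.1 - b.2.1 * a.1))

def hinv (a : H1) : H1 := (-a.1, -a.2.1, -a.2.2)

/-- r = (x²+y²)² + t². -/
def rfun (a : H1) : ℝ := (a.1 ^ 2 + a.2.1 ^ 2) ^ 2 + a.2.2 ^ 2

/-- The Heisenberg gauge ρ(x,y,t) = ((x²+y²)²+t²)^(1/4). -/
def hgauge (a : H1) : ℝ := rfun a ^ ((1 : ℝ) / 4)

/-- d(ξ,ξ₀) = ρ(ξ₀⁻¹ ∘ ξ). -/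
def hdist (a b : H1) : ℝ := hgauge (hmul (hinv b) a)

/-- Heisenberg dilations. -/
def dil (l : ℝ) (a : H1) : H1 := (l * a.1, l * a.2.1, l ^ 2 * a.2.2)

/-- X = ∂_x + 2y ∂_t. -/
def Xop (f : H1 → ℝ) (p : H1) : ℝ :=
  fderiv ℝ f p (1, 0, 0) + 2 * p.2.1 * fderiv ℝ f p (0, 0, 1)

/-- Y = ∂_y - 2x ∂_t. -/
def Yop (f : H1 → ℝ) (p : H1) : ℝ :=
  fderiv ℝ f p (0, 1, 0) - 2 * p.1 * fderiv ℝ f p (0, 0, 1)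

/-- T = ∂_t. -/
def Tder (f : H1 → ℝ) (p : H1) : ℝ := fderiv ℝ f p (0, 0, 1)

/-- (XYu + YXu)/2. -/
def symXY (f : H1 → ℝ) (p : H1) : ℝ := (Xop (Yop f) p + Yop (Xop f) p) / 2

/-- det of the symmetrized horizontal Hessian. -/
def detH (u : H1 → ℝ) (p : H1) : ℝ :=
  Xop (Xop u) p * Yop (Yop u) p - symXY u p ^ 2

/-- Positive semidefiniteness of the symmetrized horizontal Hessian at p. -/
def PSDat (u : H1 → ℝ) (p : H1) : Prop :=
  ∀ h : ℝ × ℝ,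
    0 ≤ Xop (Xop u) p * h.1 ^ 2 + 2 * symXY u p * h.1 * h.2 + Yop (Yop u) p * h.2 ^ 2

/-- The horizontal plane Π_{ξ₀}. -/
def hplane (a : H1) : Set H1 :=
  {p | p.2.2 - a.2.2 - 2 * (p.1 * a.2.1 - p.2.1 * a.1) = 0}

/-- H-convexity of a continuous function on a set, via convexity along horizontal planes. -/
def HConvexSet (S : Set H1) (u : H1 → ℝ) : Prop :=
  ContinuousOn u S ∧
  ∀ a ∈ S, ∀ b ∈ S, b ∈ hplane a → ∀ l ∈ Set.Icc (0 : ℝ) 1,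
    hmul a (dil l (hmul (hinv a) b)) ∈ S →
    u (hmul a (dil l (hmul (hinv a) b))) ≤ u a + l * (u b - u a)


namespace Stmt6Aux

def px : H1 →L[ℝ] ℝ := ContinuousLinearMap.fst ℝ ℝ (ℝ × ℝ)
def py : H1 →L[ℝ] ℝ := (ContinuousLinearMap.fst ℝ ℝ ℝ).comp (ContinuousLinearMap.snd ℝ ℝ (ℝ × ℝ))
def pt : H1 →L[ℝ] ℝ := (ContinuousLinearMap.snd ℝ ℝ ℝ).comp (ContinuousLinearMap.snd ℝ ℝ (ℝ × ℝ))
def Lctx (a b c : ℝ) : H1 →L[ℝ] ℝ := a • px + b • py + c • pt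

@[simp] lemma Lctx_apply (a b c : ℝ) (v : H1) : Lctx a b c v = a * v.1 + b * v.2.1 + c * v.2.2 := by
  simp [Lctx, px, py, pt]

lemma hx' (q : H1) : HasFDerivAt (fun z : H1 => z.1) px q := hasFDerivAt_fst
lemma hy' (q : H1) : HasFDerivAt (fun z : H1 => z.2.1) py q := hasFDerivAt_fst.comp q hasFDerivAt_snd
lemma ht' (q : H1) : HasFDerivAt (fun z : H1 => z.2.2) pt q := hasFDerivAt_snd.comp q hasFDerivAt_snd

lemma rfun_hasFDerivAt (q : H1) :
    HasFDerivAt rfun (Lctx (4*q.1*(q.1^2+q.2.1^2)) (4*q.2.1*(q.1^2+q.2.1^2)) (2*q.2.2)) q := by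
  have e : rfun = fun a : H1 => (a.1*a.1 + a.2.1*a.2.1)*(a.1*a.1 + a.2.1*a.2.1) + a.2.2*a.2.2 := by
    funext a; simp [rfun]; ring
  rw [e]
  have hs := ((hx' q).mul (hx' q)).add ((hy' q).mul (hy' q))
  have H := (hs.mul hs).add ((ht' q).mul (ht' q))
  refine H.congr_fderiv ?_
  refine ContinuousLinearMap.ext fun v => ?_
  simp [Lctx, px, py, pt]
  ring

/-- A = Xr -/
def Afun (q : H1) : ℝ := 4*q.1*(q.1^2+q.2.1^2) + 4*q.2.1*q.2.2
/-- B = Yr -/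
def Bfun (q : H1) : ℝ := 4*q.2.1*(q.1^2+q.2.1^2) - 4*q.1*q.2.2

lemma Afun_hasFDerivAt (q : H1) :
    HasFDerivAt Afun (Lctx (12*q.1^2+4*q.2.1^2) (8*q.1*q.2.1+4*q.2.2) (4*q.2.1)) q := by
  have e : Afun = fun a : H1 =>
      (4:ℝ) * (a.1*(a.1*a.1 + a.2.1*a.2.1)) + 4 * (a.2.1*a.2.2) := by
    funext a; simp [Afun]; ring
  rw [e]
  have H := (((hx' q).mul (((hx' q).mul (hx' q)).add ((hy' q).mul (hy' q)))).const_mul (4:ℝ)).add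
      (((hy' q).mul (ht' q)).const_mul (4:ℝ))
  refine H.congr_fderiv ?_
  refine ContinuousLinearMap.ext fun v => ?_
  simp [Lctx, px, py, pt]
  ring

lemma Bfun_hasFDerivAt (q : H1) :
    HasFDerivAt Bfun (Lctx (8*q.1*q.2.1-4*q.2.2) (4*q.1^2+12*q.2.1^2) (-(4*q.1))) q := by
  have e : Bfun = fun a : H1 =>
      (4:ℝ) * (a.2.1*(a.1*a.1 + a.2.1*a.2.1)) - 4 * (a.1*a.2.2) := by
    funext a; simp [Bfun]; ring
  rw [e]
  have H := (((hy' q).mul (((hx' q).mul (hx' q)).add ((hy' q).mul (hy' q)))).const_mul (4:ℝ)).sub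
      (((hx' q).mul (ht' q)).const_mul (4:ℝ))
  refine H.congr_fderiv ?_
  refine ContinuousLinearMap.ext fun v => ?_
  simp [Lctx, px, py, pt]
  ring

end Stmt6Aux

open Stmt6Aux in
/-- det H(u) for a radial function u = h(r), r = (x²+y²)²+t². -/
theorem stmt_6 (h : ℝ → ℝ) (hh : ContDiffOn ℝ 2 h (Set.Ioi 0))
    (p : H1) (hp : 0 < rfun p) :
    detH (fun q => h (rfun q)) p =
      48 * (p.1 ^ 2 + p.2.1 ^ 2) ^ 2 *
        (4 * rfun p * deriv (deriv h) (rfun p) + 3 * deriv h (rfun p)) *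
        deriv h (rfun p) := by

  classical
  set u : H1 → ℝ := fun q => h (rfun q) with hu
  have hop : IsOpen {q : H1 | 0 < rfun q} := by
    have : Continuous rfun := by unfold rfun; fun_prop
    exact isOpen_lt continuous_const this
  have hd1 : ∀ q : H1, 0 < rfun q → HasDerivAt h (deriv h (rfun q)) (rfun q) := by
    intro q hq
    exact ((hh.differentiableOn (by norm_num)).differentiableAt
      (isOpen_Ioi.mem_nhds hq)).hasDerivAt
  have hC : ContDiffOn ℝ 1 (deriv h) (Set.Ioi 0) := hh.deriv_of_isOpen isOpen_Ioi (by norm_num)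
  have hd2 : HasDerivAt (deriv h) (deriv (deriv h) (rfun p)) (rfun p) :=
    ((hC.differentiableOn one_ne_zero).differentiableAt (isOpen_Ioi.mem_nhds hp)).hasDerivAt
  -- first derivatives
  have hXu : ∀ q : H1, 0 < rfun q → Xop u q = deriv h (rfun q) * Afun q := by
    intro q hq
    have Hq : HasFDerivAt u ((deriv h (rfun q)) • (Lctx (4*q.1*(q.1^2+q.2.1^2))
        (4*q.2.1*(q.1^2+q.2.1^2)) (2*q.2.2))) q :=
      (hd1 q hq).comp_hasFDerivAt q (rfun_hasFDerivAt q)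
    rw [Xop, Hq.fderiv]
    simp [Afun]
    ring
  have hYu : ∀ q : H1, 0 < rfun q → Yop u q = deriv h (rfun q) * Bfun q := by
    intro q hq
    have Hq : HasFDerivAt u ((deriv h (rfun q)) • (Lctx (4*q.1*(q.1^2+q.2.1^2))
        (4*q.2.1*(q.1^2+q.2.1^2)) (2*q.2.2))) q :=
      (hd1 q hq).comp_hasFDerivAt q (rfun_hasFDerivAt q)
    rw [Yop, Hq.fderiv]
    simp [Bfun]
    ring
  -- second level: eventual equalities
  have hev1 : Xop u =ᶠ[nhds p] fun q => deriv h (rfun q) * Afun q :=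
    Filter.eventuallyEq_of_mem (hop.mem_nhds hp) (fun q hq => hXu q hq)
  have hev2 : Yop u =ᶠ[nhds p] fun q => deriv h (rfun q) * Bfun q :=
    Filter.eventuallyEq_of_mem (hop.mem_nhds hp) (fun q hq => hYu q hq)
  have hcomp : HasFDerivAt (fun q : H1 => deriv h (rfun q))
      ((deriv (deriv h) (rfun p)) • (Lctx (4*p.1*(p.1^2+p.2.1^2))
        (4*p.2.1*(p.1^2+p.2.1^2)) (2*p.2.2))) p :=
    hd2.comp_hasFDerivAt p (rfun_hasFDerivAt p)
  have hg1 := hcomp.mul (Afun_hasFDerivAt p)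
  have hg2 := hcomp.mul (Bfun_hasFDerivAt p)
  have hf1 : fderiv ℝ (Xop u) p = _ := hev1.fderiv_eq.trans hg1.fderiv
  have hf2 : fderiv ℝ (Yop u) p = _ := hev2.fderiv_eq.trans hg2.fderiv
  simp only [detH, symXY, Xop, Yop]
  rw [hf1, hf2]
  simp only [ContinuousLinearMap.add_apply, ContinuousLinearMap.coe_smul',
    Pi.smul_apply, Lctx_apply, smul_eq_mul, rfun, Afun, Bfun]
  ring
end
end

section
/- The gauge function ρ(x,y,t) = ((x²+y²)²+t²)^{1/4} satisfies, away from the origin, X²ρ = 3r^{-7/4}(y(x²+y²)-xt)² ≥ 0 and Y²ρ = 3r^{-7/4}(x(x²+y²)+yt)² ≥ 0 where r = (x²+y²)²+t², and det H(ρ) = 0; in particular ρ is H-convex on ℝ³∖{0}. -/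
noncomputable section

/-
With `P = x(x²+y²) + yt` and `Q = y(x²+y²) - xt` one has `Xr = 4P`, `Yr = 4Q`, `XP = YQ = 3(x²+y²)`
and `YP = t = -XQ`, so `Xρ = P r^(-3/4)` and `Yρ = Q r^(-3/4)`. Differentiating once more and using
`P² + Q² = (x²+y²) r`, the symmetrised horizontal Hessian of `ρ` is `3 r^(-7/4)` times the rank-one
matrix `(Q, -P)ᵀ (Q, -P)`: its diagonal is nonnegative, its determinant vanishes, and it is
positive semidefinite.
-/

open Filter Topology

theorem fderiv_fun_rpow_const {E : Type*} [NormedAddCommGroup E] [NormedSpace ℝ E] {f : E → ℝ}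
    {x : E} (s : ℝ) (hf : DifferentiableAt ℝ f x) (hx : f x ≠ 0) :
    fderiv ℝ (fun y => f y ^ s) x = (s * f x ^ (s - 1)) • fderiv ℝ f x :=
  (hf.hasFDerivAt.rpow_const (Or.inl hx)).fderiv

section HorizontalCalculus

variable {f g : H1 → ℝ} {p : H1}

theorem Xop_congr_of_eventuallyEq (h : f =ᶠ[𝓝 p] g) : Xop f p = Xop g p := by
  rw [Xop, Xop, h.fderiv_eq]

theorem Yop_congr_of_eventuallyEq (h : f =ᶠ[𝓝 p] g) : Yop f p = Yop g p := by
  rw [Yop, Yop, h.fderiv_eq]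

theorem Xop_mul (hf : DifferentiableAt ℝ f p) (hg : DifferentiableAt ℝ g p) :
    Xop (fun q => f q * g q) p = Xop f p * g p + f p * Xop g p := by
  simp only [Xop, fderiv_fun_mul hf hg, add_apply,
    smul_apply, smul_eq_mul]
  ring

theorem Yop_mul (hf : DifferentiableAt ℝ f p) (hg : DifferentiableAt ℝ g p) :
    Yop (fun q => f q * g q) p = Yop f p * g p + f p * Yop g p := by
  simp only [Yop, fderiv_fun_mul hf hg, add_apply,
    smul_apply, smul_eq_mul]
  ring

theorem Xop_rpow_const (s : ℝ) (hf : DifferentiableAt ℝ f p) (hfp : f p ≠ 0) :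
    Xop (fun q => f q ^ s) p = s * f p ^ (s - 1) * Xop f p := by
  simp only [Xop, fderiv_fun_rpow_const s hf hfp, smul_apply, smul_eq_mul]
  ring

theorem Yop_rpow_const (s : ℝ) (hf : DifferentiableAt ℝ f p) (hfp : f p ≠ 0) :
    Yop (fun q => f q ^ s) p = s * f p ^ (s - 1) * Yop f p := by
  simp only [Yop, fderiv_fun_rpow_const s hf hfp, smul_apply, smul_eq_mul]
  ring

end HorizontalCalculus

def gaugeP (a : H1) : ℝ := a.1 * (a.1 ^ 2 + a.2.1 ^ 2) + a.2.1 * a.2.2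

def gaugeQ (a : H1) : ℝ := a.2.1 * (a.1 ^ 2 + a.2.1 ^ 2) - a.1 * a.2.2

theorem gaugeP_sq_add_gaugeQ_sq (a : H1) :
    gaugeP a ^ 2 + gaugeQ a ^ 2 = (a.1 ^ 2 + a.2.1 ^ 2) * rfun a := by
  simp only [gaugeP, gaugeQ, rfun]
  ring

theorem rfun_pos_of_ne_zero {p : H1} (hp : p ≠ 0) : 0 < rfun p := by
  obtain ⟨x, y, t⟩ := p
  simp only [rfun]
  by_contra! h
  have hxy : x ^ 2 + y ^ 2 = 0 := by nlinarith [sq_nonneg (x ^ 2 + y ^ 2), sq_nonneg t]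
  have ht : t = 0 := by nlinarith [sq_nonneg (x ^ 2 + y ^ 2), sq_nonneg t]
  have hx : x = 0 := by nlinarith [sq_nonneg x, sq_nonneg y]
  have hy : y = 0 := by nlinarith [sq_nonneg x, sq_nonneg y]
  exact hp (by simp [hx, hy, ht])

@[fun_prop]
theorem differentiable_rfun : Differentiable ℝ rfun := by
  unfold rfun; fun_prop

@[fun_prop]
theorem differentiable_gaugeP : Differentiable ℝ gaugeP := by
  unfold gaugeP; fun_prop

@[fun_prop]
theorem differentiable_gaugeQ : Differentiable ℝ gaugeQ := by
  unfold gaugeQ; fun_prop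

theorem fderiv_rfun_apply (p v : H1) :
    fderiv ℝ rfun p v =
      4 * (p.1 ^ 2 + p.2.1 ^ 2) * (p.1 * v.1 + p.2.1 * v.2.1) + 2 * p.2.2 * v.2.2 := by
  unfold rfun
  simp (disch := fun_prop) [fderiv_fun_add, fderiv_fun_pow, fderiv.fst, fderiv.snd]
  ring

theorem fderiv_gaugeP_apply (p v : H1) :
    fderiv ℝ gaugeP p v = (3 * p.1 ^ 2 + p.2.1 ^ 2) * v.1 + (2 * p.1 * p.2.1 + p.2.2) * v.2.1
      + p.2.1 * v.2.2 := by
  unfold gaugeP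
  simp (disch := fun_prop) [fderiv_fun_add, fderiv_fun_mul, fderiv_fun_pow, fderiv.fst, fderiv.snd]
  ring

theorem fderiv_gaugeQ_apply (p v : H1) :
    fderiv ℝ gaugeQ p v = (2 * p.1 * p.2.1 - p.2.2) * v.1 + (p.1 ^ 2 + 3 * p.2.1 ^ 2) * v.2.1
      - p.1 * v.2.2 := by
  unfold gaugeQ
  simp (disch := fun_prop) [fderiv_fun_sub, fderiv_fun_add, fderiv_fun_mul, fderiv_fun_pow,
    fderiv.fst, fderiv.snd]
  ring

section HorizontalDerivatives

variable (p : H1)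

theorem Xop_rfun : Xop rfun p = 4 * gaugeP p := by
  simp only [Xop, fderiv_rfun_apply, gaugeP]; ring

theorem Yop_rfun : Yop rfun p = 4 * gaugeQ p := by
  simp only [Yop, fderiv_rfun_apply, gaugeQ]; ring

theorem Xop_gaugeP : Xop gaugeP p = 3 * (p.1 ^ 2 + p.2.1 ^ 2) := by
  simp only [Xop, fderiv_gaugeP_apply]; ring

theorem Yop_gaugeP : Yop gaugeP p = p.2.2 := by
  simp only [Yop, fderiv_gaugeP_apply]; ring

theorem Xop_gaugeQ : Xop gaugeQ p = -p.2.2 := by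
  simp only [Xop, fderiv_gaugeQ_apply]; ring

theorem Yop_gaugeQ : Yop gaugeQ p = 3 * (p.1 ^ 2 + p.2.1 ^ 2) := by
  simp only [Yop, fderiv_gaugeQ_apply]; ring

end HorizontalDerivatives

section GaugeDerivatives

variable {p : H1}

theorem Xop_mul_rfun_rpow {f : H1 → ℝ} (s : ℝ) (hf : DifferentiableAt ℝ f p) (hp : 0 < rfun p) :
    Xop (fun q => f q * rfun q ^ s) p =
      rfun p ^ (s - 1) * (rfun p * Xop f p + 4 * s * f p * gaugeP p) := by
  have hr : rfun p ^ s = rfun p ^ (s - 1) * rfun p := by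
    rw [Real.rpow_sub_one hp.ne']; field_simp
  rw [Xop_mul hf ((differentiable_rfun p).rpow_const (Or.inl hp.ne')),
    Xop_rpow_const s (differentiable_rfun p) hp.ne', Xop_rfun, hr]
  ring

theorem Yop_mul_rfun_rpow {f : H1 → ℝ} (s : ℝ) (hf : DifferentiableAt ℝ f p) (hp : 0 < rfun p) :
    Yop (fun q => f q * rfun q ^ s) p =
      rfun p ^ (s - 1) * (rfun p * Yop f p + 4 * s * f p * gaugeQ p) := by
  have hr : rfun p ^ s = rfun p ^ (s - 1) * rfun p := by
    rw [Real.rpow_sub_one hp.ne']; field_simp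
  rw [Yop_mul hf ((differentiable_rfun p).rpow_const (Or.inl hp.ne')),
    Yop_rpow_const s (differentiable_rfun p) hp.ne', Yop_rfun, hr]
  ring

theorem Xop_hgauge (hp : 0 < rfun p) : Xop hgauge p = gaugeP p * rfun p ^ (-(3 : ℝ) / 4) := by
  rw [show hgauge = fun q => rfun q ^ ((1 : ℝ) / 4) from rfl,
    Xop_rpow_const _ (differentiable_rfun p) hp.ne', Xop_rfun]
  norm_num
  ring

theorem Yop_hgauge (hp : 0 < rfun p) : Yop hgauge p = gaugeQ p * rfun p ^ (-(3 : ℝ) / 4) := by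
  rw [show hgauge = fun q => rfun q ^ ((1 : ℝ) / 4) from rfl,
    Yop_rpow_const _ (differentiable_rfun p) hp.ne', Yop_rfun]
  norm_num
  ring

theorem eventually_rfun_pos (hp : 0 < rfun p) : ∀ᶠ q in 𝓝 p, 0 < rfun q :=
  continuousAt_const.eventually_lt differentiable_rfun.continuous.continuousAt hp

theorem Xop_hgauge_eventuallyEq (hp : 0 < rfun p) :
    Xop hgauge =ᶠ[𝓝 p] fun q => gaugeP q * rfun q ^ (-(3 : ℝ) / 4) :=
  (eventually_rfun_pos hp).mono fun _ hq => Xop_hgauge hq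

theorem Yop_hgauge_eventuallyEq (hp : 0 < rfun p) :
    Yop hgauge =ᶠ[𝓝 p] fun q => gaugeQ q * rfun q ^ (-(3 : ℝ) / 4) :=
  (eventually_rfun_pos hp).mono fun _ hq => Yop_hgauge hq

private theorem neg_three_quarters_sub_one : -(3 : ℝ) / 4 - 1 = -(7 : ℝ) / 4 := by norm_num

theorem Xop_Xop_hgauge (hp : 0 < rfun p) :
    Xop (Xop hgauge) p = 3 * rfun p ^ (-(7 : ℝ) / 4) * gaugeQ p ^ 2 := by
  rw [Xop_congr_of_eventuallyEq (Xop_hgauge_eventuallyEq hp),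
    Xop_mul_rfun_rpow _ (differentiable_gaugeP p) hp, Xop_gaugeP, neg_three_quarters_sub_one]
  linear_combination (-3 * rfun p ^ (-(7 : ℝ) / 4)) * gaugeP_sq_add_gaugeQ_sq p

theorem Yop_Yop_hgauge (hp : 0 < rfun p) :
    Yop (Yop hgauge) p = 3 * rfun p ^ (-(7 : ℝ) / 4) * gaugeP p ^ 2 := by
  rw [Yop_congr_of_eventuallyEq (Yop_hgauge_eventuallyEq hp),
    Yop_mul_rfun_rpow _ (differentiable_gaugeQ p) hp, Yop_gaugeQ, neg_three_quarters_sub_one]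
  linear_combination (-3 * rfun p ^ (-(7 : ℝ) / 4)) * gaugeP_sq_add_gaugeQ_sq p

theorem symXY_hgauge (hp : 0 < rfun p) :
    symXY hgauge p = -3 * rfun p ^ (-(7 : ℝ) / 4) * gaugeP p * gaugeQ p := by
  rw [symXY, Xop_congr_of_eventuallyEq (Yop_hgauge_eventuallyEq hp),
    Yop_congr_of_eventuallyEq (Xop_hgauge_eventuallyEq hp),
    Xop_mul_rfun_rpow _ (differentiable_gaugeQ p) hp,
    Yop_mul_rfun_rpow _ (differentiable_gaugeP p) hp, Xop_gaugeQ, Yop_gaugeP,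
    neg_three_quarters_sub_one]
  ring

end GaugeDerivatives

/-- The gauge ρ is H-convex away from the origin, with X²ρ, Y²ρ ≥ 0 explicit and det H(ρ)=0. -/
theorem stmt_7 (p : H1) (hp : p ≠ 0) :
    Xop (Xop hgauge) p =
      3 * rfun p ^ (-(7 : ℝ) / 4) * (p.2.1 * (p.1 ^ 2 + p.2.1 ^ 2) - p.1 * p.2.2) ^ 2 ∧
    0 ≤ Xop (Xop hgauge) p ∧
    Yop (Yop hgauge) p =
      3 * rfun p ^ (-(7 : ℝ) / 4) * (p.1 * (p.1 ^ 2 + p.2.1 ^ 2) + p.2.1 * p.2.2) ^ 2 ∧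
    0 ≤ Yop (Yop hgauge) p ∧
    detH hgauge p = 0 ∧
    PSDat hgauge p := by
  have hr : 0 < rfun p := rfun_pos_of_ne_zero hp
  have hc : 0 < rfun p ^ (-(7 : ℝ) / 4) := Real.rpow_pos_of_pos hr _
  rw [detH, PSDat, Xop_Xop_hgauge hr, Yop_Yop_hgauge hr, symXY_hgauge hr]
  refine ⟨rfl, by positivity, rfl, by positivity, by ring, fun h => ?_⟩
  calc (0 : ℝ) ≤ 3 * rfun p ^ (-(7 : ℝ) / 4) * (gaugeQ p * h.1 - gaugeP p * h.2) ^ 2 := by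
        positivity
    _ = _ := by ring
end
end

section
/- Comparison principle for the horizontal Monge–Ampère operator: let Ω ⊂ ℝ³ be open bounded, u, v ∈ C²(Ω) with u+v H-convex and trace H(u+v) > 0 in Ω. If det H(u) ≥ det H(v) in Ω and u ≤ v on ∂Ω, then u ≤ v in Ω. -/
noncomputable section

open Filter Topology

section Helpers

lemma hasDerivAt_line (p ζ : H1) (s : ℝ) :
    HasDerivAt (fun t : ℝ => p + t • ζ) ζ s := by
  simpa using ((hasDerivAt_id s).smul_const ζ).const_add p

lemma secondDeriv_nonpos {g : H1 → ℝ} {p : H1}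
    (hg : ContDiffAt ℝ 2 g p) (hmax : IsLocalMax g p) (ζ : H1) :
    fderiv ℝ (fderiv ℝ g) p ζ ζ ≤ 0 := by
  set L := fderiv ℝ (fderiv ℝ g) p ζ ζ with hLdef
  by_contra hcon
  push_neg at hcon
  have hdf : ContDiffAt ℝ 1 (fderiv ℝ g) p := hg.fderiv_right (by norm_num)
  have hdfd : DifferentiableAt ℝ (fderiv ℝ g) p := hdf.differentiableAt (by norm_num)
  set c : ℝ → ℝ := fun s => g (p + s • ζ) with hcdef
  set c' : ℝ → ℝ := fun s => fderiv ℝ g (p + s • ζ) ζ with hc'def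
  -- c' has derivative L at 0
  have h2 : HasDerivAt (fun s : ℝ => fderiv ℝ g (p + s • ζ))
      (fderiv ℝ (fderiv ℝ g) p ζ) 0 := by
    have hstep : HasFDerivAt (fderiv ℝ g) (fderiv ℝ (fderiv ℝ g) p) (p + (0:ℝ) • ζ) := by
      simpa using hdfd.hasFDerivAt
    exact hstep.comp_hasDerivAt 0 (hasDerivAt_line p ζ 0)
  have hc' : HasDerivAt c' L 0 := by
    have := h2.clm_apply (hasDerivAt_const 0 ζ)
    simpa using this
  have hc'0 : c' 0 = 0 := by
    simp [hc'def, hmax.fderiv_eq_zero]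
  -- eventual facts
  have htend : Tendsto (fun s : ℝ => p + s • ζ) (𝓝 0) (𝓝 p) := by
    have : ContinuousAt (fun s : ℝ => p + s • ζ) 0 := by fun_prop
    simpa using this.tendsto
  have hev1 : ∀ᶠ s in 𝓝 (0:ℝ), DifferentiableAt ℝ g (p + s • ζ) :=
    htend.eventually ((hg.eventually (by norm_num)).mono
      (fun q hq => hq.differentiableAt (by norm_num)))
  have hev2 : ∀ᶠ s in 𝓝 (0:ℝ), c s ≤ c 0 := by
    have := htend.eventually hmax
    simpa [hcdef] using this
  have hevc : ∀ᶠ s in 𝓝 (0:ℝ), HasDerivAt c (c' s) s :=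
    hev1.mono (fun s hs => by
      exact hs.hasFDerivAt.comp_hasDerivAt s (hasDerivAt_line p ζ s))
  -- slope of c' at 0 eventually > L/2
  have hslope : ∀ᶠ s in 𝓝[≠] (0:ℝ), L/2 < slope c' 0 s := by
    rw [hasDerivAt_iff_tendsto_slope] at hc'
    exact hc'.eventually (eventually_gt_nhds (half_lt_self hcon))
  have hall : ∀ᶠ s in 𝓝[>] (0:ℝ),
      (L/2 < slope c' 0 s) ∧ HasDerivAt c (c' s) s ∧ c s ≤ c 0 := by
    refine Filter.Eventually.and ?_ (Filter.Eventually.and ?_ ?_)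
    · exact nhdsWithin_mono 0 (fun x hx => ne_of_gt hx) hslope
    · exact nhdsWithin_le_nhds hevc
    · exact nhdsWithin_le_nhds hev2
  obtain ⟨b, hb, hIoo⟩ := (mem_nhdsGT_iff_exists_Ioo_subset).1 hall
  have hbpos : (0:ℝ) < b := hb
  -- c is strictly monotone on [0, b/2]... use midpoint
  set b' : ℝ := b/2 with hb'def
  have hb'pos : 0 < b' := by positivity
  have hb'lt : b' < b := by
    rw [hb'def]; linarith
  have hmono : StrictMonoOn c (Set.Icc 0 b') := by
    apply strictMonoOn_of_deriv_pos (convex_Icc 0 b')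
    · intro s hs
      rcases eq_or_lt_of_le hs.1 with h0 | h0
      · have : HasDerivAt c (c' 0) 0 := by
          have hgd : HasFDerivAt g (fderiv ℝ g p) (p + (0:ℝ) • ζ) := by
            simpa using (hg.differentiableAt (by norm_num)).hasFDerivAt
          have e : c' 0 = fderiv ℝ g p ζ := by simp [hc'def]
          rw [e]
          exact hgd.comp_hasDerivAt 0 (hasDerivAt_line p ζ 0)
        rw [← h0]
        exact this.continuousAt.continuousWithinAt
      · have hsm : s ∈ Set.Ioo 0 b := ⟨h0, lt_of_le_of_lt hs.2 hb'lt⟩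
        exact ((hIoo hsm).2.1).continuousAt.continuousWithinAt
    · intro s hs
      rw [interior_Icc] at hs
      have hsm : s ∈ Set.Ioo 0 b := ⟨hs.1, lt_trans hs.2 hb'lt⟩
      obtain ⟨h1, h2, _⟩ := hIoo hsm
      rw [h2.deriv]
      have hsl : slope c' 0 s = c' s / s := by
        simp [slope_def_field, hc'0]
      rw [hsl] at h1
      have h3 : L/2 * s < c' s := (lt_div_iff₀ hs.1).1 h1
      nlinarith [mul_pos (half_pos hcon) hs.1]
  have hcb : c b' ≤ c 0 := (hIoo ⟨hb'pos, hb'lt⟩).2.2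
  have : c 0 < c b' := hmono (Set.left_mem_Icc.2 (le_of_lt hb'pos))
    ⟨le_of_lt hb'pos, le_refl _⟩ hb'pos
  linarith

lemma diff_coord_y : Differentiable ℝ (fun q : H1 => 2 * q.2.1) := by fun_prop

lemma diff_coord_x : Differentiable ℝ (fun q : H1 => 2 * q.1) := by fun_prop

lemma fderiv_coord_y (p : H1) (w : H1) :
    fderiv ℝ (fun q : H1 => 2 * q.2.1) p w = 2 * w.2.1 := by
  have h : HasFDerivAt (fun q : H1 => 2 * q.2.1)
      ((2:ℝ) • ((ContinuousLinearMap.fst ℝ ℝ ℝ).comp (ContinuousLinearMap.snd ℝ ℝ (ℝ × ℝ)))) p := by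
    exact ((hasFDerivAt_snd.fst)).const_mul 2
  rw [h.fderiv]
  simp

lemma fderiv_coord_x (p : H1) (w : H1) :
    fderiv ℝ (fun q : H1 => 2 * q.1) p w = 2 * w.1 := by
  have h : HasFDerivAt (fun q : H1 => 2 * q.1)
      ((2:ℝ) • (ContinuousLinearMap.fst ℝ ℝ (ℝ × ℝ))) p := by
    exact (hasFDerivAt_fst).const_mul 2
  rw [h.fderiv]
  simp

lemma diff_Xop {f : H1 → ℝ} {p : H1} (hd : DifferentiableAt ℝ (fderiv ℝ f) p) :
    DifferentiableAt ℝ (Xop f) p := by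
  unfold Xop
  exact (hd.clm_apply (differentiableAt_const _)).add
    (((diff_coord_y p)).mul (hd.clm_apply (differentiableAt_const _)))

lemma diff_Yop {f : H1 → ℝ} {p : H1} (hd : DifferentiableAt ℝ (fderiv ℝ f) p) :
    DifferentiableAt ℝ (Yop f) p := by
  unfold Yop
  exact (hd.clm_apply (differentiableAt_const _)).sub
    (((diff_coord_x p)).mul (hd.clm_apply (differentiableAt_const _)))

lemma fderiv_Xop_apply {f : H1 → ℝ} {p : H1}
    (hd : DifferentiableAt ℝ (fderiv ℝ f) p) (w : H1) :
    fderiv ℝ (Xop f) p w =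
      fderiv ℝ (fderiv ℝ f) p w (1,0,0) + 2 * w.2.1 * fderiv ℝ f p (0,0,1)
        + 2 * p.2.1 * fderiv ℝ (fderiv ℝ f) p w (0,0,1) := by
  unfold Xop
  rw [fderiv_fun_add ((hd.clm_apply (differentiableAt_const _)))
    (((diff_coord_y p)).fun_mul (hd.clm_apply (differentiableAt_const _)))]
  rw [ContinuousLinearMap.add_apply]
  rw [fderiv_clm_apply hd (differentiableAt_const _)]
  rw [fderiv_fun_mul (diff_coord_y p) (hd.clm_apply (differentiableAt_const _))]
  rw [fderiv_clm_apply hd (differentiableAt_const _)]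
  simp [fderiv_coord_y]
  ring

lemma fderiv_Yop_apply {f : H1 → ℝ} {p : H1}
    (hd : DifferentiableAt ℝ (fderiv ℝ f) p) (w : H1) :
    fderiv ℝ (Yop f) p w =
      fderiv ℝ (fderiv ℝ f) p w (0,1,0) - 2 * w.1 * fderiv ℝ f p (0,0,1)
        - 2 * p.1 * fderiv ℝ (fderiv ℝ f) p w (0,0,1) := by
  unfold Yop
  rw [fderiv_fun_sub ((hd.clm_apply (differentiableAt_const _)))
    (((diff_coord_x p)).fun_mul (hd.clm_apply (differentiableAt_const _)))]
  rw [ContinuousLinearMap.sub_apply]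
  rw [fderiv_clm_apply hd (differentiableAt_const _)]
  rw [fderiv_fun_mul (diff_coord_x p) (hd.clm_apply (differentiableAt_const _))]
  rw [fderiv_clm_apply hd (differentiableAt_const _)]
  simp [fderiv_coord_x]
  ring

/-- The horizontal quadratic form equals the second differential along the
horizontal direction. -/
lemma key_form {f : H1 → ℝ} {p : H1}
    (hd : DifferentiableAt ℝ (fderiv ℝ f) p) (h1 h2 : ℝ) :
    Xop (Xop f) p * h1^2 + 2 * symXY f p * h1 * h2 + Yop (Yop f) p * h2^2
      = fderiv ℝ (fderiv ℝ f) p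
          (h1 • ((1,0,0) + (2*p.2.1) • ((0,0,1):H1)) + h2 • ((0,1,0) + (-(2*p.1)) • ((0,0,1):H1)))
          (h1 • ((1,0,0) + (2*p.2.1) • ((0,0,1):H1)) + h2 • ((0,1,0) + (-(2*p.1)) • ((0,0,1):H1))) := by
  unfold symXY
  rw [show Xop (Xop f) p = fderiv ℝ (Xop f) p (1,0,0) + 2*p.2.1 * fderiv ℝ (Xop f) p (0,0,1) from rfl]
  rw [show Xop (Yop f) p = fderiv ℝ (Yop f) p (1,0,0) + 2*p.2.1 * fderiv ℝ (Yop f) p (0,0,1) from rfl]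
  rw [show Yop (Xop f) p = fderiv ℝ (Xop f) p (0,1,0) - 2*p.1 * fderiv ℝ (Xop f) p (0,0,1) from rfl]
  rw [show Yop (Yop f) p = fderiv ℝ (Yop f) p (0,1,0) - 2*p.1 * fderiv ℝ (Yop f) p (0,0,1) from rfl]
  rw [fderiv_Xop_apply hd (1,0,0), fderiv_Xop_apply hd (0,0,1), fderiv_Xop_apply hd (0,1,0),
    fderiv_Yop_apply hd (1,0,0), fderiv_Yop_apply hd (0,0,1), fderiv_Yop_apply hd (0,1,0)]
  simp only [map_add, map_smul, ContinuousLinearMap.add_apply, ContinuousLinearMap.smul_apply,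
    smul_eq_mul]
  ring

def phifun (q : H1) : ℝ := q.1 ^ 2 + q.2.1 ^ 2

lemma Xop_congr {f₁ f₂ : H1 → ℝ} {p : H1} (h : f₁ =ᶠ[𝓝 p] f₂) :
    Xop f₁ p = Xop f₂ p := by
  unfold Xop; rw [h.fderiv_eq]

lemma Yop_congr {f₁ f₂ : H1 → ℝ} {p : H1} (h : f₁ =ᶠ[𝓝 p] f₂) :
    Yop f₁ p = Yop f₂ p := by
  unfold Yop; rw [h.fderiv_eq]

lemma Xop_comb {f₁ f₂ f₃ : H1 → ℝ} {q : H1} (ε : ℝ)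
    (h₁ : DifferentiableAt ℝ f₁ q) (h₂ : DifferentiableAt ℝ f₂ q)
    (h₃ : DifferentiableAt ℝ f₃ q) :
    Xop (fun x => f₁ x - f₂ x + ε * f₃ x) q = Xop f₁ q - Xop f₂ q + ε * Xop f₃ q := by
  unfold Xop
  rw [fderiv_fun_add (h₁.fun_sub h₂) (h₃.const_mul ε), fderiv_fun_sub h₁ h₂, fderiv_const_mul h₃ ε]
  simp
  ring

lemma Yop_comb {f₁ f₂ f₃ : H1 → ℝ} {q : H1} (ε : ℝ)
    (h₁ : DifferentiableAt ℝ f₁ q) (h₂ : DifferentiableAt ℝ f₂ q)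
    (h₃ : DifferentiableAt ℝ f₃ q) :
    Yop (fun x => f₁ x - f₂ x + ε * f₃ x) q = Yop f₁ q - Yop f₂ q + ε * Yop f₃ q := by
  unfold Yop
  rw [fderiv_fun_add (h₁.fun_sub h₂) (h₃.const_mul ε), fderiv_fun_sub h₁ h₂, fderiv_const_mul h₃ ε]
  simp
  ring

lemma Xop_add {f₁ f₂ : H1 → ℝ} {q : H1}
    (h₁ : DifferentiableAt ℝ f₁ q) (h₂ : DifferentiableAt ℝ f₂ q) :
    Xop (fun x => f₁ x + f₂ x) q = Xop f₁ q + Xop f₂ q := by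
  unfold Xop
  rw [fderiv_fun_add h₁ h₂]
  simp
  ring

lemma Yop_add {f₁ f₂ : H1 → ℝ} {q : H1}
    (h₁ : DifferentiableAt ℝ f₁ q) (h₂ : DifferentiableAt ℝ f₂ q) :
    Yop (fun x => f₁ x + f₂ x) q = Yop f₁ q + Yop f₂ q := by
  unfold Yop
  rw [fderiv_fun_add h₁ h₂]
  simp
  ring

-- phifun facts
lemma phifun_contDiff : ContDiff ℝ 2 phifun := by
  unfold phifun; fun_prop

lemma phifun_fderiv (q : H1) (w : H1) :
    fderiv ℝ phifun q w = 2 * q.1 * w.1 + 2 * q.2.1 * w.2.1 := by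
  have h1 : HasFDerivAt (fun x : H1 => x.1 * x.1)
      (q.1 • (ContinuousLinearMap.fst ℝ ℝ (ℝ × ℝ)) + q.1 • (ContinuousLinearMap.fst ℝ ℝ (ℝ × ℝ))) q := by
    have := (hasFDerivAt_fst (p := q) (𝕜 := ℝ)).mul (hasFDerivAt_fst (p := q) (𝕜 := ℝ))
    exact this
  have h2 : HasFDerivAt (fun x : H1 => x.2.1 * x.2.1)
      (q.2.1 • ((ContinuousLinearMap.fst ℝ ℝ ℝ).comp (ContinuousLinearMap.snd ℝ ℝ (ℝ × ℝ))) + q.2.1 • ((ContinuousLinearMap.fst ℝ ℝ ℝ).comp (ContinuousLinearMap.snd ℝ ℝ (ℝ × ℝ)))) q := by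
    have := (hasFDerivAt_snd (p := q) (𝕜 := ℝ)).fst.mul (hasFDerivAt_snd (p := q) (𝕜 := ℝ)).fst
    exact this
  have h : HasFDerivAt phifun
      ((q.1 • (ContinuousLinearMap.fst ℝ ℝ (ℝ × ℝ)) + q.1 • (ContinuousLinearMap.fst ℝ ℝ (ℝ × ℝ))) +
        (q.2.1 • ((ContinuousLinearMap.fst ℝ ℝ ℝ).comp (ContinuousLinearMap.snd ℝ ℝ (ℝ × ℝ))) + q.2.1 • ((ContinuousLinearMap.fst ℝ ℝ ℝ).comp (ContinuousLinearMap.snd ℝ ℝ (ℝ × ℝ))))) q := by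
    have hfe : phifun = fun x : H1 => x.1 * x.1 + x.2.1 * x.2.1 := by
      funext x; simp [phifun, pow_two]
    rw [hfe]; exact h1.add h2
  rw [h.fderiv]
  simp
  ring

lemma Xop_phifun : Xop phifun = fun q : H1 => 2 * q.1 := by
  funext q
  unfold Xop
  rw [phifun_fderiv, phifun_fderiv]
  simp

lemma Yop_phifun : Yop phifun = fun q : H1 => 2 * q.2.1 := by
  funext q
  unfold Yop
  rw [phifun_fderiv, phifun_fderiv]
  simp

lemma fderiv_2x (p : H1) (w : H1) :
    fderiv ℝ (fun q : H1 => 2 * q.1) p w = 2 * w.1 := by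
  have h : HasFDerivAt (fun q : H1 => 2 * q.1)
      ((2:ℝ) • (ContinuousLinearMap.fst ℝ ℝ (ℝ × ℝ))) p := (hasFDerivAt_fst).const_mul 2
  rw [h.fderiv]; simp

lemma fderiv_2y (p : H1) (w : H1) :
    fderiv ℝ (fun q : H1 => 2 * q.2.1) p w = 2 * w.2.1 := by
  have h : HasFDerivAt (fun q : H1 => 2 * q.2.1)
      ((2:ℝ) • ((ContinuousLinearMap.fst ℝ ℝ ℝ).comp (ContinuousLinearMap.snd ℝ ℝ (ℝ × ℝ)))) p :=
    ((hasFDerivAt_snd.fst)).const_mul 2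
  rw [h.fderiv]; simp

lemma XX_phifun (p : H1) : Xop (Xop phifun) p = 2 := by
  rw [Xop_phifun]; unfold Xop; rw [fderiv_2x, fderiv_2x]; simp

lemma YY_phifun (p : H1) : Yop (Yop phifun) p = 2 := by
  rw [Yop_phifun]; unfold Yop; rw [fderiv_2y, fderiv_2y]; simp

lemma symXY_phifun (p : H1) : symXY phifun p = 0 := by
  unfold symXY
  rw [Xop_phifun, Yop_phifun]
  unfold Xop Yop
  rw [fderiv_2x, fderiv_2x, fderiv_2y, fderiv_2y]
  simp

lemma XY_phifun (p : H1) : Xop (Yop phifun) p = 0 := by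
  rw [Yop_phifun]
  unfold Xop
  rw [fderiv_2y, fderiv_2y]
  simp

lemma YX_phifun (p : H1) : Yop (Xop phifun) p = 0 := by
  rw [Xop_phifun]
  unfold Yop
  rw [fderiv_2x, fderiv_2x]
  simp

lemma diff_Xop_phifun (p : H1) : DifferentiableAt ℝ (Xop phifun) p := by
  rw [Xop_phifun]; fun_prop

lemma diff_Yop_phifun (p : H1) : DifferentiableAt ℝ (Yop phifun) p := by
  rw [Yop_phifun]; fun_prop

lemma discrim_psd {a b c : ℝ} (h : ∀ x y : ℝ, 0 ≤ a * x^2 + 2*b*x*y + c * y^2) :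
    b^2 ≤ a * c := by
  have ha : 0 ≤ a := by have := h 1 0; linarith
  have hc : 0 ≤ c := by have := h 0 1; linarith
  have h1 : 0 ≤ a * (a*c - b^2) := by have := h b (-a); nlinarith
  have h2 : 0 ≤ c * (a*c - b^2) := by have := h c (-b); nlinarith
  by_contra hlt
  push_neg at hlt
  have ha0 : a = 0 := by nlinarith
  have hc0 : c = 0 := by nlinarith
  have := h 1 (-b)
  nlinarith

/-- trace(adj A · N) ≥ 0 for PSD 2x2 symmetric matrices. -/
lemma trace_adj_nonneg {a b c s t r : ℝ} (ha : 0 ≤ a) (hc : 0 ≤ c) (hb : b^2 ≤ a*c)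
    (hs : 0 ≤ s) (hr : 0 ≤ r) (ht : t^2 ≤ s*r) :
    0 ≤ c*s + a*r - 2*b*t := by
  have hcs : 0 ≤ c*s := mul_nonneg hc hs
  have har : 0 ≤ a*r := mul_nonneg ha hr
  have h4 : b^2 * t^2 ≤ (a*c) * (s*r) :=
    mul_le_mul hb ht (sq_nonneg t) (le_trans (sq_nonneg b) hb)
  nlinarith [sq_nonneg (c*s - a*r), sq_nonneg (c*s + a*r), hcs, har, h4]

/-- The final scalar contradiction. -/
lemma scalar_final {au bu cu av bv cv ε : ℝ} (hε : 0 < ε)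
    (hpsd : ∀ x y : ℝ, 0 ≤ (au+av) * x^2 + 2*(bu+bv)*x*y + (cu+cv) * y^2)
    (htr : 0 < (au+av) + (cu+cv))
    (hmax : ∀ x y : ℝ, (au-av+2*ε) * x^2 + 2*(bu-bv)*x*y + (cu-cv+2*ε) * y^2 ≤ 0)
    (hdet : av*cv - bv^2 ≤ au*cu - bu^2) : False := by
  have ha : 0 ≤ au + av := by have := hpsd 1 0; linarith
  have hc : 0 ≤ cu + cv := by have := hpsd 0 1; linarith
  have hb : (bu+bv)^2 ≤ (au+av)*(cu+cv) := discrim_psd hpsd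
  have hs : 0 ≤ -(au-av+2*ε) := by have := hmax 1 0; linarith
  have hr : 0 ≤ -(cu-cv+2*ε) := by have := hmax 0 1; linarith
  have ht : (-(bu-bv))^2 ≤ (-(au-av+2*ε))*(-(cu-cv+2*ε)) := by
    apply discrim_psd
    intro x y
    nlinarith [hmax x y]
  have key := trace_adj_nonneg ha hc hb hs hr ht
  nlinarith [key, mul_pos hε htr]

end Helpers

/-- Comparison principle for the horizontal Monge–Ampère operator. -/
theorem stmt_13 (Ω : Set H1) (hΩo : IsOpen Ω) (hΩb : Bornology.IsBounded Ω)
    (u v : H1 → ℝ)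
    (hu : ContDiffOn ℝ 2 u Ω) (hv : ContDiffOn ℝ 2 v Ω)
    (huc : ContinuousOn u (closure Ω)) (hvc : ContinuousOn v (closure Ω))
    (hconv : ∀ p ∈ Ω, PSDat (fun q => u q + v q) p)
    (htr : ∀ p ∈ Ω,
      0 < Xop (Xop (fun q => u q + v q)) p + Yop (Yop (fun q => u q + v q)) p)
    (hdet : ∀ p ∈ Ω, detH v p ≤ detH u p)
    (hbd : ∀ p ∈ frontier Ω, u p ≤ v p) :
    ∀ p ∈ Ω, u p ≤ v p := by
  by_contra hcon
  push_neg at hcon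
  obtain ⟨p₀, hp₀, hlt⟩ := hcon
  set m : ℝ := u p₀ - v p₀ with hmdef
  have hm : 0 < m := by simp [hmdef]; linarith
  have hcomp : IsCompact (closure Ω) := hΩb.isCompact_closure
  have hne : (closure Ω).Nonempty := ⟨p₀, subset_closure hp₀⟩
  have hφcont : ContinuousOn phifun (closure Ω) := phifun_contDiff.continuous.continuousOn
  obtain ⟨q₀, hq₀cl, hq₀max⟩ := hcomp.exists_isMaxOn hne hφcont
  set C : ℝ := phifun q₀ with hCdef
  have hC0 : 0 ≤ C := by
    have : 0 ≤ phifun q₀ := by unfold phifun; positivity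
    simpa [hCdef] using this
  set ε : ℝ := m / (2 * (C + 1)) with hεdef
  have hε : 0 < ε := by
    apply div_pos hm; nlinarith
  set g : H1 → ℝ := fun q => u q - v q + ε * phifun q with hgdef
  have hgc : ContinuousOn g (closure Ω) :=
    (huc.sub hvc).add (continuousOn_const.mul hφcont)
  obtain ⟨p, hpcl, hpmax⟩ := hcomp.exists_isMaxOn hne hgc
  have hglb : m ≤ g p := by
    have h1 : g p₀ ≤ g p := hpmax (subset_closure hp₀)
    have h2 : 0 ≤ phifun p₀ := by unfold phifun; positivity
    have h3 : m + ε * phifun p₀ ≤ g p := by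
      calc m + ε * phifun p₀ = g p₀ := by simp only [hgdef, hmdef]
      _ ≤ g p := h1
    nlinarith
  have hp : p ∈ Ω := by
    by_contra hnot
    have hfr : p ∈ frontier Ω := by
      rw [frontier, hΩo.interior_eq]; exact ⟨hpcl, hnot⟩
    have h1 : u p - v p ≤ 0 := by linarith [hbd p hfr]
    have h2 : phifun p ≤ C := hq₀max hpcl
    have h3 : g p ≤ ε * C := by
      have := mul_le_mul_of_nonneg_left h2 (le_of_lt hε)
      simp [hgdef]; linarith
    have h4 : ε * (2 * (C + 1)) = m := by
      rw [hεdef]; field_simp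
    nlinarith
  -- smoothness data at p
  have hΩnp : Ω ∈ 𝓝 p := hΩo.mem_nhds hp
  have hg2 : ContDiffOn ℝ 2 g Ω :=
    (hu.sub hv).add (contDiffOn_const.mul phifun_contDiff.contDiffOn)
  have hg2at : ContDiffAt ℝ 2 g p := hg2.contDiffAt hΩnp
  have hdu : DifferentiableAt ℝ (fderiv ℝ u) p :=
    ((hu.contDiffAt hΩnp).fderiv_right (m := 1) (by norm_num)).differentiableAt (by norm_num)
  have hdv : DifferentiableAt ℝ (fderiv ℝ v) p :=
    ((hv.contDiffAt hΩnp).fderiv_right (m := 1) (by norm_num)).differentiableAt (by norm_num)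
  have hdg : DifferentiableAt ℝ (fderiv ℝ g) p :=
    (hg2at.fderiv_right (m := 1) (by norm_num)).differentiableAt (by norm_num)
  have hduv : DifferentiableAt ℝ (fderiv ℝ (fun q => u q + v q)) p :=
    (((hu.contDiffAt hΩnp).add (hv.contDiffAt hΩnp)).fderiv_right (m := 1)
      (by norm_num)).differentiableAt (by norm_num)
  have hdiffu : ∀ q ∈ Ω, DifferentiableAt ℝ u q := fun q hq =>
    (hu.contDiffAt (hΩo.mem_nhds hq)).differentiableAt (by norm_num)
  have hdiffv : ∀ q ∈ Ω, DifferentiableAt ℝ v q := fun q hq =>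
    (hv.contDiffAt (hΩo.mem_nhds hq)).differentiableAt (by norm_num)
  have hdiffφ : ∀ q : H1, DifferentiableAt ℝ phifun q := fun q =>
    phifun_contDiff.differentiable (by norm_num) q
  -- local max
  have hlocmax : IsLocalMax g p :=
    hpmax.isLocalMax (Filter.mem_of_superset hΩnp subset_closure)
  -- operator-level decompositions for g
  have hXg : Xop g =ᶠ[𝓝 p] fun q => Xop u q - Xop v q + ε * Xop phifun q := by
    filter_upwards [hΩnp] with q hq
    exact Xop_comb ε (hdiffu q hq) (hdiffv q hq) (hdiffφ q)
  have hYg : Yop g =ᶠ[𝓝 p] fun q => Yop u q - Yop v q + ε * Yop phifun q := by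
    filter_upwards [hΩnp] with q hq
    exact Yop_comb ε (hdiffu q hq) (hdiffv q hq) (hdiffφ q)
  have hXXg : Xop (Xop g) p = Xop (Xop u) p - Xop (Xop v) p + ε * 2 := by
    rw [Xop_congr hXg, Xop_comb ε (diff_Xop hdu) (diff_Xop hdv) (diff_Xop_phifun p),
      XX_phifun]
  have hYYg : Yop (Yop g) p = Yop (Yop u) p - Yop (Yop v) p + ε * 2 := by
    rw [Yop_congr hYg, Yop_comb ε (diff_Yop hdu) (diff_Yop hdv) (diff_Yop_phifun p),
      YY_phifun]
  have hXYg : Xop (Yop g) p = Xop (Yop u) p - Xop (Yop v) p := by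
    rw [Xop_congr hYg, Xop_comb ε (diff_Yop hdu) (diff_Yop hdv) (diff_Yop_phifun p),
      XY_phifun]
    ring
  have hYXg : Yop (Xop g) p = Yop (Xop u) p - Yop (Xop v) p := by
    rw [Yop_congr hXg, Yop_comb ε (diff_Xop hdu) (diff_Xop hdv) (diff_Xop_phifun p),
      YX_phifun]
    ring
  have hsymg : symXY g p = symXY u p - symXY v p := by
    unfold symXY
    rw [hXYg, hYXg]
    ring
  -- operator-level decompositions for u + v
  have hXuv : Xop (fun q => u q + v q) =ᶠ[𝓝 p] fun q => Xop u q + Xop v q := by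
    filter_upwards [hΩnp] with q hq
    exact Xop_add (hdiffu q hq) (hdiffv q hq)
  have hYuv : Yop (fun q => u q + v q) =ᶠ[𝓝 p] fun q => Yop u q + Yop v q := by
    filter_upwards [hΩnp] with q hq
    exact Yop_add (hdiffu q hq) (hdiffv q hq)
  have hXXuv : Xop (Xop (fun q => u q + v q)) p = Xop (Xop u) p + Xop (Xop v) p := by
    rw [Xop_congr hXuv, Xop_add (diff_Xop hdu) (diff_Xop hdv)]
  have hYYuv : Yop (Yop (fun q => u q + v q)) p = Yop (Yop u) p + Yop (Yop v) p := by
    rw [Yop_congr hYuv, Yop_add (diff_Yop hdu) (diff_Yop hdv)]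
  have hsymuv : symXY (fun q => u q + v q) p = symXY u p + symXY v p := by
    unfold symXY
    rw [Xop_congr hYuv, Xop_add (diff_Yop hdu) (diff_Yop hdv),
      Yop_congr hXuv, Yop_add (diff_Xop hdu) (diff_Xop hdv)]
    ring
  -- scalar quantities
  set au := Xop (Xop u) p
  set bu := symXY u p
  set cu := Yop (Yop u) p
  set av := Xop (Xop v) p
  set bv := symXY v p
  set cv := Yop (Yop v) p
  -- conditions for scalar_final
  have hpsd : ∀ x y : ℝ, 0 ≤ (au+av) * x^2 + 2*(bu+bv)*x*y + (cu+cv) * y^2 := by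
    intro x y
    have := hconv p hp (x, y)
    rw [hXXuv, hYYuv, hsymuv] at this
    nlinarith [this]
  have htr' : 0 < (au+av) + (cu+cv) := by
    have := htr p hp
    rw [hXXuv, hYYuv] at this
    linarith
  have hmaxq : ∀ x y : ℝ, (au-av+2*ε) * x^2 + 2*(bu-bv)*x*y + (cu-cv+2*ε) * y^2 ≤ 0 := by
    intro x y
    have hq := key_form hdg x y
    have hle := secondDeriv_nonpos hg2at hlocmax
      (x • ((1,0,0) + (2*p.2.1) • ((0,0,1):H1)) + y • ((0,1,0) + (-(2*p.1)) • ((0,0,1):H1)))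
    rw [← hq, hXXg, hYYg, hsymg] at hle
    nlinarith [hle]
  have hdet' : av*cv - bv^2 ≤ au*cu - bu^2 := by
    have := hdet p hp
    unfold detH at this
    linarith [this]
  exact scalar_final hε hpsd htr' hmaxq hdet'
end
end

section
/- Let ξ₀ ∈ B_R(0), let ξ = (0,0,t₀) ∈ Π_{ξ₀}, where ξ₀ = (x₀,y₀,t₀), and let λ > 0 be such that ξ' = ξ₀∘δ_λ(ξ₀⁻¹∘ξ) ∈ ∂B_R(0). Then λ ≥ 2; consequently, if u is H-convex in B_R(0) with u = 0 on ∂B_R(0), then u(0,0,t₀) ≤ ½ u(ξ₀). -/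
/-! The horizontal line through `ξ₀ = (x₀, y₀, t₀)` and `ξ = (0, 0, t₀)` lies in `Π_{ξ₀}` at height
`t₀`, and on it the Heisenberg segments `ξ₀ ∘ δ_λ(ξ₀⁻¹ ∘ ξ)` are Euclidean segments. Its points are
`(c x₀, c y₀, t₀)`, with `ξ₀` at `c = 1`, `ξ` at `c = 0` and `ξ'` at `c = 1 - λ`; their gauge is even
in `c` and nondecreasing in `|c|`, so `ξ' ∈ ∂B_R(0)` and `ξ₀ ∈ B_R(0)` force `|1 - λ| > 1`, i.e.
`λ ≥ 2`, and the point at `c = λ - 1` is on `∂B_R(0)` too. Convexity on the chord between these two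
boundary points gives `u(ξ₀) ≤ 0`; convexity on the segment from `ξ₀` to `ξ'` gives
`u(ξ) ≤ (1 - 1/λ) u(ξ₀) ≤ u(ξ₀) / 2`. -/

noncomputable section

/-- For fixed `a`, `c ↦ scaleXY c a` parametrizes the horizontal line through `a` and
`(0, 0, a.2.2)`. -/
def scaleXY (c : ℝ) (a : H1) : H1 := (c * a.1, c * a.2.1, a.2.2)

@[simp]
lemma scaleXY_one (a : H1) : scaleXY 1 a = a := by
  simp [scaleXY]

@[simp]
lemma scaleXY_zero (a : H1) : scaleXY 0 a = (0, 0, a.2.2) := by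
  simp [scaleXY]

lemma hmul_dil_hmul_hinv_of_mem_hplane {a b : H1} (hb : b ∈ hplane a) (s : ℝ) :
    hmul a (dil s (hmul (hinv a) b)) = AffineMap.lineMap a b s := by
  simp only [hplane, Set.mem_ofPred_eq] at hb
  ext <;> simp only [hmul, hinv, dil, AffineMap.lineMap_apply_module', Prod.fst_add, Prod.snd_add,
    Prod.smul_fst, Prod.smul_snd, Prod.fst_sub, Prod.snd_sub, smul_eq_mul]
  · ring
  · ring
  · linear_combination (s ^ 2 - s) * hb

lemma scaleXY_mem_hplane_scaleXY (a : H1) (c d : ℝ) : scaleXY d a ∈ hplane (scaleXY c a) := by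
  simp only [hplane, scaleXY, Set.mem_ofPred_eq]
  ring

lemma lineMap_scaleXY (a : H1) (c d s : ℝ) :
    AffineMap.lineMap (scaleXY c a) (scaleXY d a) s = scaleXY (c + s * (d - c)) a := by
  simp only [scaleXY, AffineMap.lineMap_apply_module', Prod.smul_mk, Prod.mk_sub_mk,
    Prod.mk_add_mk, smul_eq_mul, Prod.mk.injEq]
  refine ⟨by ring, by ring, by ring⟩

lemma hgauge_scaleXY_neg (a : H1) (c : ℝ) : hgauge (scaleXY (-c) a) = hgauge (scaleXY c a) := by
  simp only [hgauge, rfun, scaleXY, neg_mul, neg_sq]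

lemma hgauge_scaleXY_le (a : H1) {c : ℝ} (hc : |c| ≤ 1) : hgauge (scaleXY c a) ≤ hgauge a := by
  have hc4 : c ^ 4 ≤ 1 := by
    rw [← Even.pow_abs (by decide)]
    exact pow_le_one₀ (abs_nonneg c) hc
  refine Real.rpow_le_rpow (by unfold rfun; positivity) ?_ (by norm_num)
  simp only [rfun, scaleXY]
  nlinarith [sq_nonneg (a.1 ^ 2 + a.2.1 ^ 2)]

lemma HConvexSet.apply_scaleXY_le {S : Set H1} {u : H1 → ℝ} (hu : HConvexSet S u) {a : H1}
    {c d s : ℝ} (hc : scaleXY c a ∈ S) (hd : scaleXY d a ∈ S) (hs : s ∈ Set.Icc (0 : ℝ) 1)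
    (hcd : scaleXY (c + s * (d - c)) a ∈ S) :
    u (scaleXY (c + s * (d - c)) a) ≤
      u (scaleXY c a) + s * (u (scaleXY d a) - u (scaleXY c a)) := by
  have hseg := hmul_dil_hmul_hinv_of_mem_hplane (scaleXY_mem_hplane_scaleXY a c d) s
  rw [lineMap_scaleXY] at hseg
  rw [← hseg] at hcd ⊢
  exact hu.2 _ hc _ hd (scaleXY_mem_hplane_scaleXY a c d) s hs hcd

section BoundaryValues

variable {R l : ℝ} {a : H1} {u : H1 → ℝ}

lemma two_le_of_hgauge_scaleXY_eq (ha : hgauge a < R) (hl : 0 < l)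
    (hbdry : hgauge (scaleXY (1 - l) a) = R) : 2 ≤ l := by
  by_contra! hl2
  have := hgauge_scaleXY_le a (c := 1 - l) (abs_le.2 ⟨by linarith, by linarith⟩)
  linarith

variable (hu : HConvexSet {p : H1 | hgauge p ≤ R} u) (hzero : ∀ p : H1, hgauge p = R → u p = 0)
  (ha : hgauge a < R) (hl : 2 ≤ l) (hbdry : hgauge (scaleXY (1 - l) a) = R)
include hu hzero ha hl hbdry

/-- `a` lies on the horizontal chord joining the boundary points `scaleXY (±(1 - l)) a`. -/
lemma apply_nonpos_of_hgauge_scaleXY_eq : u a ≤ 0 := by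
  have hbdry' : hgauge (scaleXY (l - 1) a) = R := by
    rw [← neg_sub, hgauge_scaleXY_neg, hbdry]
  have hl1 : 0 < l - 1 := by linarith
  have hμ : (1 - l) + l / (2 * (l - 1)) * ((l - 1) - (1 - l)) = 1 := by
    field_simp
    ring
  have hchord := hu.apply_scaleXY_le (s := l / (2 * (l - 1))) hbdry.le hbdry'.le
    ⟨by positivity, (div_le_one (by positivity)).2 (by linarith)⟩
    (by rw [hμ, scaleXY_one]; exact ha.le)
  rwa [hμ, scaleXY_one, hzero _ hbdry, hzero _ hbdry', sub_self, mul_zero, add_zero] at hchord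

lemma apply_scaleXY_zero_le_half_of_hgauge_scaleXY_eq : u (scaleXY 0 a) ≤ u a / 2 := by
  have hnonpos := apply_nonpos_of_hgauge_scaleXY_eq hu hzero ha hl hbdry
  have hs : 1 + 1 / l * ((1 - l) - 1) = 0 := by
    field_simp
    ring
  have hcenter : hgauge (scaleXY 0 a) ≤ R :=
    (hgauge_scaleXY_le a (by simp)).trans ha.le
  have hseg := hu.apply_scaleXY_le (c := 1) (d := 1 - l) (s := 1 / l)
    (by rw [scaleXY_one]; exact ha.le) hbdry.le
    ⟨by positivity, (div_le_one (by linarith)).2 (by linarith)⟩ (by rw [hs]; exact hcenter)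
  rw [hs, scaleXY_one, hzero _ hbdry] at hseg
  have hl' : 1 / l ≤ 1 / 2 := one_div_le_one_div_of_le two_pos hl
  nlinarith

end BoundaryValues

theorem stmt_15_general (R : ℝ) (ξ₀ : H1) (hξ₀ : hgauge ξ₀ < R)
    (ξ : H1) (hξ : ξ = ((0 : ℝ), (0 : ℝ), ξ₀.2.2))
    (l : ℝ) (hl : 0 < l)
    (hbdry : hgauge (hmul ξ₀ (dil l (hmul (hinv ξ₀) ξ))) = R) :
    2 ≤ l ∧
    ∀ u : H1 → ℝ, HConvexSet {p : H1 | hgauge p ≤ R} u →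
      (∀ p : H1, hgauge p = R → u p = 0) →
      u ξ ≤ u ξ₀ / 2 := by
  have hξ_eq : ξ = scaleXY 0 ξ₀ := by rw [hξ, scaleXY_zero]
  have hξ' : hmul ξ₀ (dil l (hmul (hinv ξ₀) ξ)) = scaleXY (1 - l) ξ₀ := by
    have hseg := hmul_dil_hmul_hinv_of_mem_hplane (scaleXY_mem_hplane_scaleXY ξ₀ 1 0) l
    rwa [lineMap_scaleXY, scaleXY_one, ← hξ_eq, zero_sub, mul_neg_one, ← sub_eq_add_neg] at hseg
  rw [hξ'] at hbdry
  have hl2 := two_le_of_hgauge_scaleXY_eq hξ₀ hl hbdry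
  refine ⟨hl2, fun u hu hzero => ?_⟩
  rw [hξ_eq]
  exact apply_scaleXY_zero_le_half_of_hgauge_scaleXY_eq hu hzero hξ₀ hl2 hbdry

/-- Key lemma, part (1): for ξ₀ ∈ B_R(0) and ξ = (0,0,t₀) one has λ ≥ 2,
and consequently u(ξ) ≤ ½ u(ξ₀) for H-convex u vanishing on ∂B_R(0). -/
theorem stmt_15 (R : ℝ) (hR : 0 < R) (ξ₀ : H1) (hξ₀ : hgauge ξ₀ < R)
    (ξ : H1) (hξ : ξ = ((0 : ℝ), (0 : ℝ), ξ₀.2.2))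
    (l : ℝ) (hl : 0 < l)
    (hbdry : hgauge (hmul ξ₀ (dil l (hmul (hinv ξ₀) ξ))) = R) :
    2 ≤ l ∧
    ∀ u : H1 → ℝ, HConvexSet {p : H1 | hgauge p ≤ R} u →
      (∀ p : H1, hgauge p = R → u p = 0) →
      u ξ ≤ u ξ₀ / 2 :=
  stmt_15_general R ξ₀ hξ₀ ξ hξ l hl hbdry
end
end

section
/- Let 0 < α, β < 1 with α + β < 1, let ξ₀ ∈ B_R(0) with ρ(ξ₀) ≤ αR, ξ ∈ Π_{ξ₀} with d(ξ₀,ξ) ≤ βR, and let λ > 0 be such that ξ₀∘δ_λ(ξ₀⁻¹∘ξ) ∈ ∂B_R(0). Then λ ≥ (1-α)/β; consequently, if u is H-convex in B_R(0) and u = 0 on ∂B_R(0), then u(ξ) ≤ ((1-α-β)/(1-α))·u(ξ₀). -/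
noncomputable section

lemma rfun_nonneg (a : H1) : 0 ≤ rfun a := by unfold rfun; positivity

lemma hgauge_nonneg (a : H1) : 0 ≤ hgauge a :=
  Real.rpow_nonneg (rfun_nonneg a) _

lemma hgauge_pow4 (a : H1) : hgauge a ^ 4 = rfun a := by
  rw [hgauge, ← Real.rpow_natCast (rfun a ^ ((1:ℝ)/4)) 4, ← Real.rpow_mul (rfun_nonneg a)]
  norm_num

lemma hgauge_le_iff {a : H1} {R : ℝ} (hR : 0 ≤ R) : hgauge a ≤ R ↔ rfun a ≤ R ^ 4 := by
  rw [← hgauge_pow4]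
  exact (pow_le_pow_iff_left₀ (hgauge_nonneg a) hR (by norm_num)).symm

lemma hgauge_eq_iff {a : H1} {R : ℝ} (hR : 0 ≤ R) : hgauge a = R ↔ rfun a = R ^ 4 := by
  rw [← hgauge_pow4]
  constructor
  · intro h; rw [h]
  · intro h
    refine le_antisymm ?_ ?_
    · exact (pow_le_pow_iff_left₀ (hgauge_nonneg a) hR (by norm_num : (4:ℕ) ≠ 0)).mp h.le
    · exact (pow_le_pow_iff_left₀ hR (hgauge_nonneg a) (by norm_num : (4:ℕ) ≠ 0)).mp h.ge

lemma hgauge_dil {l : ℝ} (hl : 0 ≤ l) (a : H1) : hgauge (dil l a) = l * hgauge a := by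
  have h4 : rfun (dil l a) = l ^ 4 * rfun a := by unfold rfun dil; ring
  rw [hgauge, h4, Real.mul_rpow (by positivity) (rfun_nonneg a), hgauge]
  congr 1
  rw [← Real.rpow_natCast l 4, ← Real.rpow_mul hl]
  norm_num

lemma hgauge_swap (a b : H1) : hgauge (hmul (hinv b) a) = hgauge (hmul (hinv a) b) := by
  unfold hgauge
  congr 1
  unfold rfun hmul hinv
  ring

/-- Cygan triangle inequality for the gauge. -/
lemma hgauge_triangle (a b : H1) : hgauge (hmul a b) ≤ hgauge a + hgauge b := by
  set za : ℂ := ⟨a.1, a.2.1⟩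
  set zb : ℂ := ⟨b.1, b.2.1⟩
  set ga : ℂ := ⟨a.1 ^ 2 + a.2.1 ^ 2, a.2.2⟩
  set gb : ℂ := ⟨b.1 ^ 2 + b.2.1 ^ 2, b.2.2⟩
  set gc : ℂ := ⟨(hmul a b).1 ^ 2 + (hmul a b).2.1 ^ 2, (hmul a b).2.2⟩
  have key : gc = ga + gb + 2 * (starRingEnd ℂ zb) * za := by
    apply Complex.ext <;>
      simp [ga, gb, gc, za, zb, hmul, Complex.add_re, Complex.add_im, Complex.mul_re,
        Complex.mul_im] <;> ring
  have habs : ∀ p : H1, ‖(⟨p.1 ^ 2 + p.2.1 ^ 2, p.2.2⟩ : ℂ)‖ = hgauge p ^ 2 := by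
    intro p
    rw [Complex.norm_def, Complex.normSq_mk]
    have h1 : (p.1 ^ 2 + p.2.1 ^ 2) * (p.1 ^ 2 + p.2.1 ^ 2) + p.2.2 * p.2.2 = rfun p := by
      unfold rfun; ring
    rw [h1, ← hgauge_pow4 p, show (4:ℕ) = 2*2 from rfl, pow_mul,
      Real.sqrt_sq (sq_nonneg _)]
  have hza : ‖za‖ ≤ hgauge a := by
    have h1 : ‖za‖ ^ 2 ≤ hgauge a ^ 2 := by
      have : ‖za‖ ^ 2 = a.1 ^ 2 + a.2.1 ^ 2 := by
        rw [Complex.sq_norm, Complex.normSq_mk]; ring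
      rw [this, ← habs a]
      calc a.1 ^ 2 + a.2.1 ^ 2 = (ga).re := rfl
        _ ≤ ‖ga‖ := Complex.re_le_norm ga
    exact (pow_le_pow_iff_left₀ (norm_nonneg za) (hgauge_nonneg a) (by norm_num)).mp h1
  have hzb : ‖zb‖ ≤ hgauge b := by
    have h1 : ‖zb‖ ^ 2 ≤ hgauge b ^ 2 := by
      have : ‖zb‖ ^ 2 = b.1 ^ 2 + b.2.1 ^ 2 := by
        rw [Complex.sq_norm, Complex.normSq_mk]; ring
      rw [this, ← habs b]
      calc b.1 ^ 2 + b.2.1 ^ 2 = (gb).re := rfl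
        _ ≤ ‖gb‖ := Complex.re_le_norm gb
    exact (pow_le_pow_iff_left₀ (norm_nonneg zb) (hgauge_nonneg b) (by norm_num)).mp h1
  have hsq : hgauge (hmul a b) ^ 2 ≤ (hgauge a + hgauge b) ^ 2 := by
    have h1 : hgauge (hmul a b) ^ 2 = ‖gc‖ := (habs (hmul a b)).symm
    rw [h1, key]
    calc ‖ga + gb + 2 * (starRingEnd ℂ zb) * za‖
        ≤ ‖ga‖ + ‖gb‖ + ‖2 * (starRingEnd ℂ zb) * za‖ := by
          refine le_trans (norm_add_le _ _) ?_
          gcongr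
          exact norm_add_le _ _
      _ = hgauge a ^ 2 + hgauge b ^ 2 + 2 * ‖zb‖ * ‖za‖ := by
          rw [habs a, habs b]
          simp [map_mul]
      _ ≤ (hgauge a + hgauge b) ^ 2 := by
          nlinarith [hza, hzb, hgauge_nonneg a, hgauge_nonneg b, norm_nonneg za,
            norm_nonneg zb]
  exact (pow_le_pow_iff_left₀ (hgauge_nonneg _) (add_nonneg (hgauge_nonneg a) (hgauge_nonneg b)) (by norm_num : (2:ℕ) ≠ 0)).mp hsq

/-- Maximum principle: an H-convex function vanishing on the boundary is ≤ 0. -/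
lemma max_principle {R : ℝ} (hR : 0 < R) {u : H1 → ℝ}
    (hu : HConvexSet {p : H1 | hgauge p ≤ R} u)
    (hb : ∀ p : H1, hgauge p = R → u p = 0)
    (p : H1) (hp : hgauge p ≤ R) : u p ≤ 0 := by
  set γ : ℝ → H1 := fun s => (p.1 + s, p.2.1, p.2.2 + 2 * s * p.2.1) with hγ
  set g : ℝ → ℝ := fun s => ((p.1 + s) ^ 2 + p.2.1 ^ 2) ^ 2 + (p.2.2 + 2 * s * p.2.1) ^ 2
    with hg
  have hgγ : ∀ s, rfun (γ s) = g s := fun s => rfl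
  have hcont : Continuous g := by fun_prop
  set M : ℝ := |p.1| + R + 1 with hM
  have hM0 : 0 ≤ M := by positivity
  have hg0 : g 0 ≤ R ^ 4 := by
    have := (hgauge_le_iff hR.le).mp hp
    unfold rfun at this
    simpa [hg] using this
  have hgM : R ^ 4 ≤ g M := by
    have h1 : R + 1 ≤ p.1 + M := by
      have := abs_le.mp (le_refl |p.1|) |>.1
      simp only [hM]; linarith [neg_abs_le p.1]
    have h2 : (R+1)^4 ≤ (p.1 + M)^4 := pow_le_pow_left₀ (by positivity) h1 4
    have h4 : R^4 ≤ (R+1)^4 := pow_le_pow_left₀ hR.le (by linarith) 4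
    simp only [hg]
    nlinarith [sq_nonneg ((p.1+M)*p.2.1), sq_nonneg (p.2.1^2), sq_nonneg (p.2.2 + 2*M*p.2.1)]
  have hgM' : R ^ 4 ≤ g (-M) := by
    have h1 : p.1 + -M ≤ -(R + 1) := by
      simp only [hM]; linarith [le_abs_self p.1]
    have h2 : (R+1)^4 ≤ (-(p.1 + -M))^4 := pow_le_pow_left₀ (by positivity) (by linarith) 4
    have h3 : (-(p.1 + -M))^4 = (p.1 + -M)^4 := by ring
    have h4 : R^4 ≤ (R+1)^4 := pow_le_pow_left₀ hR.le (by linarith) 4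
    simp only [hg]
    nlinarith [sq_nonneg ((p.1 + -M)*p.2.1), sq_nonneg (p.2.1^2),
      sq_nonneg (p.2.2 + 2*(-M)*p.2.1)]
  obtain ⟨sp, hspmem, hsp⟩ : ∃ s ∈ Set.Icc (0:ℝ) M, g s = R ^ 4 := by
    have := intermediate_value_Icc hM0 hcont.continuousOn (a := 0) (b := M)
    obtain ⟨s, hs, hgs⟩ := this ⟨hg0, hgM⟩
    exact ⟨s, hs, hgs⟩
  obtain ⟨sm, hsmmem, hsm⟩ : ∃ s ∈ Set.Icc (-M) (0:ℝ), g s = R ^ 4 := by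
    have := intermediate_value_Icc' (by linarith : -M ≤ (0:ℝ)) hcont.continuousOn
    obtain ⟨s, hs, hgs⟩ := this ⟨hg0, hgM'⟩
    exact ⟨s, hs, hgs⟩
  have hsm0 : sm ≤ 0 := hsmmem.2
  have hsp0 : 0 ≤ sp := hspmem.1
  rcases eq_or_lt_of_le (hsm0.trans hsp0) with heq | hlt
  · -- sm = sp = 0, p on boundary
    have h0 : sp = 0 := le_antisymm (by linarith) hsp0
    have : hgauge p = R := by
      rw [hgauge_eq_iff hR.le]
      have := hsp; rw [h0] at this
      unfold rfun; simpa [hg] using this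
    simpa [hb p this]
  · -- apply H-convexity with a = γ sm, b = γ sp
    set lam : ℝ := (-sm) / (sp - sm) with hlam
    have hd : 0 < sp - sm := by linarith
    have hlam0 : 0 ≤ lam := div_nonneg (by linarith) hd.le
    have hlam1 : lam ≤ 1 := by
      rw [hlam, div_le_one hd]; linarith
    have haS : hgauge (γ sm) = R := by rw [hgauge_eq_iff hR.le, hgγ, hsm]
    have hbS : hgauge (γ sp) = R := by rw [hgauge_eq_iff hR.le, hgγ, hsp]
    have hplan : γ sp ∈ hplane (γ sm) := by
      simp only [hplane, Set.mem_setOf_eq, hγ]; ring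
    have hcomb : hmul (γ sm) (dil lam (hmul (hinv (γ sm)) (γ sp))) = p := by
      have hl : lam * (sp - sm) = -sm := by
        rw [hlam, div_mul_cancel₀]; exact ne_of_gt hd
      refine Prod.ext ?_ (Prod.ext ?_ ?_)
      · simp only [hmul, hinv, dil, hγ]; linear_combination hl
      · simp only [hmul, hinv, dil, hγ]; ring
      · simp only [hmul, hinv, dil, hγ]; linear_combination 2 * p.2.1 * hl
    have := hu.2 (γ sm) (by simp [Set.mem_setOf_eq, haS]) (γ sp)
      (by simp [Set.mem_setOf_eq, hbS]) hplan lam ⟨hlam0, hlam1⟩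
      (by rw [hcomb]; exact hp)
    rw [hcomb] at this
    rw [hb _ haS, hb _ hbS] at this
    simpa using this

lemma hmul_cancel (a x : H1) : hmul a (hmul (hinv a) x) = x := by
  refine Prod.ext ?_ (Prod.ext ?_ ?_) <;> simp only [hmul, hinv] <;> ring

lemma hmul_cancel' (a x : H1) : hmul (hinv a) (hmul a x) = x := by
  refine Prod.ext ?_ (Prod.ext ?_ ?_) <;> simp only [hmul, hinv] <;> ring

lemma dil_dil (a b : ℝ) (x : H1) : dil a (dil b x) = dil (a * b) x := by
  refine Prod.ext ?_ (Prod.ext ?_ ?_) <;> simp only [dil] <;> ring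

lemma dil_one (x : H1) : dil 1 x = x := by
  refine Prod.ext ?_ (Prod.ext ?_ ?_) <;> simp [dil]

/-- Key lemma, part (2): if ρ(ξ₀) ≤ αR and d(ξ₀,ξ) ≤ βR with ξ ∈ Π_{ξ₀},
then λ ≥ (1-α)/β, and consequently u(ξ) ≤ ((1-α-β)/(1-α)) u(ξ₀). -/
theorem stmt_16 (R : ℝ) (hR : 0 < R) (α β : ℝ)
    (hα : 0 < α) (hα1 : α < 1) (hβ : 0 < β) (hβ1 : β < 1) (hαβ : α + β < 1)
    (ξ₀ : H1) (hξ₀ : hgauge ξ₀ ≤ α * R)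
    (ξ : H1) (hξp : ξ ∈ hplane ξ₀) (hξd : hdist ξ₀ ξ ≤ β * R)
    (l : ℝ) (hl : 0 < l)
    (hbdry : hgauge (hmul ξ₀ (dil l (hmul (hinv ξ₀) ξ))) = R) :
    (1 - α) / β ≤ l ∧
    ∀ u : H1 → ℝ, HConvexSet {p : H1 | hgauge p ≤ R} u →
      (∀ p : H1, hgauge p = R → u p = 0) →
      u ξ ≤ ((1 - α - β) / (1 - α)) * u ξ₀ := by
  set ζ : H1 := hmul (hinv ξ₀) ξ with hζ
  have hζρ : hgauge ζ ≤ β * R := by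
    rw [hζ, ← hgauge_swap]
    exact hξd
  have hlge : (1 - α) / β ≤ l := by
    have htri : R ≤ hgauge ξ₀ + l * hgauge ζ := by
      calc R = hgauge (hmul ξ₀ (dil l ζ)) := hbdry.symm
        _ ≤ hgauge ξ₀ + hgauge (dil l ζ) := hgauge_triangle _ _
        _ = hgauge ξ₀ + l * hgauge ζ := by rw [hgauge_dil hl.le]
    have h1 : (1 - α) * R ≤ l * (β * R) := by
      have := hgauge_nonneg ζ
      nlinarith [mul_le_mul_of_nonneg_left hζρ hl.le]
    rw [div_le_iff₀ hβ]
    have hR' := hR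
    nlinarith
  refine ⟨hlge, fun u hu hb => ?_⟩
  have hl1 : 1 < l := lt_of_lt_of_le (by rw [lt_div_iff₀ hβ]; linarith) hlge
  set η : H1 := hmul ξ₀ (dil l ζ) with hη
  have hξ₀S : hgauge ξ₀ ≤ R := le_trans hξ₀ (by nlinarith)
  have hηS : hgauge η ≤ R := le_of_eq hbdry
  have hplan : η ∈ hplane ξ₀ := by
    have hζ3 : ζ.2.2 = 0 := by
      have := hξp
      simp only [hplane, Set.mem_setOf_eq] at this
      simp only [hζ, hmul, hinv]
      linarith
    simp only [hplane, Set.mem_setOf_eq, hη, hmul, dil]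
    simp only [hζ3]
    ring
  have hcomb : hmul ξ₀ (dil (1 / l) (hmul (hinv ξ₀) η)) = ξ := by
    rw [hη, hmul_cancel', dil_dil, one_div_mul_cancel (ne_of_gt hl), dil_one, hζ, hmul_cancel]
  have hξS : hgauge ξ ≤ R := by
    have : hgauge ξ = hgauge (hmul ξ₀ ζ) := by rw [hζ, hmul_cancel]
    rw [this]
    calc hgauge (hmul ξ₀ ζ) ≤ hgauge ξ₀ + hgauge ζ := hgauge_triangle _ _
      _ ≤ α * R + β * R := add_le_add hξ₀ hζρ
      _ ≤ R := by nlinarith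
  have hinv1 : (0:ℝ) ≤ 1 / l := by positivity
  have hinv2 : 1 / l ≤ 1 := by rw [div_le_one hl]; linarith
  have hconv := hu.2 ξ₀ (by simpa using hξ₀S) η (by simpa using hηS) hplan (1 / l)
    ⟨hinv1, hinv2⟩ (by rw [hcomb]; simpa using hξS)
  rw [hcomb] at hconv
  rw [hb η hbdry] at hconv
  have hmax : u ξ₀ ≤ 0 := max_principle hR hu hb ξ₀ hξ₀S
  have hcoef : (1 - α - β) / (1 - α) ≤ 1 - 1 / l := by
    have h1α : (0:ℝ) < 1 - α := by linarith
    have h2 : 1 / l ≤ β / (1 - α) := by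
      rw [div_le_div_iff₀ hl h1α]
      have := hlge
      rw [div_le_iff₀ hβ] at this
      linarith
    have h3 : (1 - α - β) / (1 - α) = 1 - β / (1 - α) := by field_simp
    linarith
  calc u ξ ≤ u ξ₀ + 1 / l * (0 - u ξ₀) := hconv
    _ = (1 - 1 / l) * u ξ₀ := by ring
    _ ≤ ((1 - α - β) / (1 - α)) * u ξ₀ := mul_le_mul_of_nonpos_right hcoef hmax
end
end

section
/- On a gauge ball B_R ⊂ ℝ³ with 0 < σ < 1 and m₀ ≤ 0, the function v(ξ) = (m₀/((1-σ⁴)R⁴))·(R⁴ - ‖ξ‖⁴), where ‖(x,y,t)‖⁴ = (x²+y²)²+t², is H-convex in B_R, equals 0 on ∂B_R, equals m₀ on ∂B_{σR}, and satisfies det H(v) = 144(x²+y²)²·(m₀/((1-σ⁴)R⁴))² ≥ 0 and X²v = Y²v = -12(x²+y²)·m₀/((1-σ⁴)R⁴) ≥ 0. -/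
/-!
With `|z|² = x² + y²` one has `X ‖ξ‖⁴ = 4x|z|² + 4yt` and `Y ‖ξ‖⁴ = 4y|z|² - 4xt`. Differentiating
once more, `X²‖ξ‖⁴ = Y²‖ξ‖⁴ = 12|z|²`, while `XY‖ξ‖⁴ = -4t` and `YX‖ξ‖⁴ = 4t` cancel in the
symmetrization. So the horizontal Hessian of `c (K - ‖ξ‖⁴)` is `-12c|z|²` times the identity. For
`c = m₀/((1-σ⁴)R⁴) ≤ 0` this is positive semidefinite everywhere, and the boundary values follow from
`‖ξ‖⁴ = R⁴`, resp. `‖ξ‖⁴ = σ⁴R⁴`.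
-/
noncomputable section

section CoordinateDerivatives

variable {𝕜 E F G : Type*} [NontriviallyNormedField 𝕜] [NormedAddCommGroup E] [NormedSpace 𝕜 E]
  [NormedAddCommGroup F] [NormedSpace 𝕜 F] [NormedAddCommGroup G] [NormedSpace 𝕜 G]

@[simp] lemma fderiv_fst_snd (p : E × F × G) :
    fderiv 𝕜 (fun q : E × F × G => q.2.1) p =
      (ContinuousLinearMap.fst 𝕜 F G).comp (ContinuousLinearMap.snd 𝕜 E (F × G)) :=
  (hasFDerivAt_fst.comp p hasFDerivAt_snd).fderiv

@[simp] lemma fderiv_snd_snd (p : E × F × G) :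
    fderiv 𝕜 (fun q : E × F × G => q.2.2) p =
      (ContinuousLinearMap.snd 𝕜 F G).comp (ContinuousLinearMap.snd 𝕜 E (F × G)) :=
  (hasFDerivAt_snd.comp p hasFDerivAt_snd).fderiv

end CoordinateDerivatives

section Barrier

variable (c K : ℝ)

lemma Xop_barrier : Xop (fun ξ => c * (K - rfun ξ)) =
    fun p => -4 * c * (p.1 * (p.1 ^ 2 + p.2.1 ^ 2) + p.2.1 * p.2.2) := by
  funext p
  simp (disch := fun_prop)
    [Xop, rfun, fderiv_fst, fderiv_const_mul, fderiv_fun_add, fderiv_fun_sub, fderiv_fun_pow]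
  ring

lemma Yop_barrier : Yop (fun ξ => c * (K - rfun ξ)) =
    fun p => -4 * c * (p.2.1 * (p.1 ^ 2 + p.2.1 ^ 2) - p.1 * p.2.2) := by
  funext p
  simp (disch := fun_prop)
    [Yop, rfun, fderiv_fst, fderiv_const_mul, fderiv_fun_add, fderiv_fun_sub, fderiv_fun_pow]
  ring

lemma Xop_Xop_barrier (p : H1) :
    Xop (Xop fun ξ => c * (K - rfun ξ)) p = -12 * (p.1 ^ 2 + p.2.1 ^ 2) * c := by
  simp (disch := fun_prop)
    [Xop_barrier, Xop, fderiv_fst, fderiv_const_mul, fderiv_fun_add, fderiv_fun_mul, fderiv_fun_pow]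
  ring

lemma Yop_Yop_barrier (p : H1) :
    Yop (Yop fun ξ => c * (K - rfun ξ)) p = -12 * (p.1 ^ 2 + p.2.1 ^ 2) * c := by
  simp (disch := fun_prop)
    [Yop_barrier, Yop, fderiv_fst, fderiv_const_mul, fderiv_fun_add, fderiv_fun_sub, fderiv_fun_mul,
      fderiv_fun_pow]
  ring

lemma symXY_barrier (p : H1) : symXY (fun ξ => c * (K - rfun ξ)) p = 0 := by
  simp (disch := fun_prop)
    [symXY, Xop_barrier, Yop_barrier, Xop, Yop, fderiv_fst, fderiv_const_mul, fderiv_fun_add,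
      fderiv_fun_sub, fderiv_fun_mul, fderiv_fun_pow]
  ring

lemma detH_barrier (p : H1) :
    detH (fun ξ => c * (K - rfun ξ)) p = 144 * (p.1 ^ 2 + p.2.1 ^ 2) ^ 2 * c ^ 2 := by
  rw [detH, Xop_Xop_barrier, Yop_Yop_barrier, symXY_barrier]
  ring

end Barrier

lemma PSDat_of_symXY_eq_zero {u : H1 → ℝ} {p : H1} (hX : 0 ≤ Xop (Xop u) p)
    (hY : 0 ≤ Yop (Yop u) p) (hXY : symXY u p = 0) : PSDat u p := by
  intro h
  rw [hXY]
  nlinarith [mul_nonneg hX (sq_nonneg h.1), mul_nonneg hY (sq_nonneg h.2)]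

lemma hgauge_pow_four (ξ : H1) : hgauge ξ ^ 4 = rfun ξ := by
  have hr : 0 ≤ rfun ξ := by unfold rfun; positivity
  rw [hgauge, ← Real.rpow_natCast, ← Real.rpow_mul hr]
  norm_num

/-- Properties of the barrier v(ξ) = m₀/((1-σ⁴)R⁴)·(R⁴-‖ξ‖⁴). -/
theorem stmt_19 (R σ m₀ : ℝ) (hR : 0 < R) (hσ : 0 < σ) (hσ1 : σ < 1) (hm₀ : m₀ ≤ 0) :
    let v : H1 → ℝ := fun ξ => m₀ / ((1 - σ ^ 4) * R ^ 4) * (R ^ 4 - rfun ξ)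
    (∀ ξ : H1, hgauge ξ = R → v ξ = 0) ∧
    (∀ ξ : H1, hgauge ξ = σ * R → v ξ = m₀) ∧
    (∀ ξ : H1, detH v ξ =
      144 * (ξ.1 ^ 2 + ξ.2.1 ^ 2) ^ 2 * (m₀ / ((1 - σ ^ 4) * R ^ 4)) ^ 2) ∧
    (∀ ξ : H1, 0 ≤ detH v ξ) ∧
    (∀ ξ : H1,
      Xop (Xop v) ξ = -12 * (ξ.1 ^ 2 + ξ.2.1 ^ 2) * (m₀ / ((1 - σ ^ 4) * R ^ 4)) ∧
      Yop (Yop v) ξ = -12 * (ξ.1 ^ 2 + ξ.2.1 ^ 2) * (m₀ / ((1 - σ ^ 4) * R ^ 4)) ∧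
      0 ≤ Xop (Xop v) ξ) ∧
    (∀ ξ : H1, hgauge ξ < R → PSDat v ξ) := by
  intro v
  have hden : 0 < (1 - σ ^ 4) * R ^ 4 :=
    mul_pos (sub_pos.2 (pow_lt_one₀ hσ.le hσ1 four_ne_zero)) (pow_pos hR 4)
  have hc : m₀ / ((1 - σ ^ 4) * R ^ 4) ≤ 0 := div_nonpos_of_nonpos_of_nonneg hm₀ hden.le
  have hXX : ∀ ξ : H1, 0 ≤ Xop (Xop v) ξ := fun ξ => by
    rw [Xop_Xop_barrier]
    nlinarith [mul_nonneg (add_nonneg (sq_nonneg ξ.1) (sq_nonneg ξ.2.1)) (neg_nonneg.2 hc)]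
  have hYY : ∀ ξ : H1, 0 ≤ Yop (Yop v) ξ := fun ξ => by
    rw [Yop_Yop_barrier, ← Xop_Xop_barrier _ (R ^ 4)]
    exact hXX ξ
  refine ⟨fun ξ hξ => ?_, fun ξ hξ => ?_, detH_barrier _ _, fun ξ => ?_,
    fun ξ => ⟨Xop_Xop_barrier _ _ ξ, Yop_Yop_barrier _ _ ξ, hXX ξ⟩,
    fun ξ _ => PSDat_of_symXY_eq_zero (hXX ξ) (hYY ξ) (symXY_barrier _ _ ξ)⟩
  · change _ * (R ^ 4 - rfun ξ) = 0
    rw [← hgauge_pow_four, hξ, sub_self, mul_zero]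
  · change _ * (R ^ 4 - rfun ξ) = m₀
    rw [← hgauge_pow_four, hξ, div_mul_eq_mul_div, div_eq_iff hden.ne']
    ring
  · rw [detH_barrier]
    positivity
end
end
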